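/- arXiv:2604.09328 — 3 statements merged into one kernel-verified Lean document; each statement's English description precedes it below -/
import Mathlib

section
/- If a perfect Euler brick exists, i.e. positive integers e1, e2, e3 such that e1²+e2², e1²+e3², e2²+e3², and e1²+e2²+e3² are all perfect squares, then there exist coprime positive integers a > b and m > n, with a−b odd and m−n odd, such that (2ab)²(m²−n²)² + (a²−b²)²(2mn)² and (a²+b²)²(m²−n²)² + (a²−b²)²(2mn)² are both perfect squares. -/
/-! Halving a brick all of whose edges are even gives a brick, so some brick has an odd edge `x`.
The two faces through `x` are Pythagorean triples with odd leg `x`, so Euclid's parametrization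
gives `x = k(a²-b²)`, `y = 2kab` and `x = l(m²-n²)`, `z = 2lmn`. Multiplied by `(kl)²`, the two
quartics become `x²(y²+z²)` and `x²(x²+y²+z²)`, squares by the third face diagonal and the space
diagonal. -/

theorem Nat.isSquare_of_sq_mul {c s : ℕ} (hc : c ≠ 0) (h : IsSquare (c ^ 2 * s)) : IsSquare s := by
  obtain ⟨r, hr⟩ := h
  obtain ⟨t, rfl⟩ : c ∣ r := (Nat.pow_dvd_pow_iff two_ne_zero).mp ⟨s, by rw [hr, sq]⟩
  exact ⟨t, Nat.eq_of_mul_eq_mul_left (by positivity) (hr.trans (by ring))⟩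

theorem Nat.euclid_param_sq_add_sq {a b : ℕ} (h : b ≤ a) :
    (a ^ 2 - b ^ 2) ^ 2 + (2 * a * b) ^ 2 = (a ^ 2 + b ^ 2) ^ 2 := by
  have : b ^ 2 ≤ a ^ 2 := Nat.pow_le_pow_left h 2
  zify [this]
  ring

theorem Nat.exists_euclid_param_of_coprime_of_odd {p q : ℕ} (hpq : p.Coprime q) (hp : Odd p)
    (hq : 0 < q) (h : IsSquare (p ^ 2 + q ^ 2)) :
    ∃ a b : ℕ, 0 < b ∧ b < a ∧ a.Coprime b ∧ Odd (a - b) ∧ p = a ^ 2 - b ^ 2 ∧ q = 2 * a * b := by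
  obtain ⟨r, hr⟩ := h
  have hr' : (p : ℤ) ^ 2 + (q : ℤ) ^ 2 = r * r := by exact_mod_cast hr
  have htriple : PythagoreanTriple (p : ℤ) q r := by
    unfold PythagoreanTriple; linear_combination hr'
  have hr0 : (0 : ℤ) < r := by
    have : (0 : ℤ) < q := by exact_mod_cast hq
    nlinarith [sq_nonneg (p : ℤ), sq_nonneg (r : ℤ)]
  have hp2 : (p : ℤ) % 2 = 1 := by obtain ⟨t, rfl⟩ := hp; omega
  obtain ⟨m, n, hpmn, hqmn, -, hmn, hparity, hm⟩ :=
    htriple.coprime_classification' (by rwa [Int.gcd_natCast_natCast]) hp2 hr0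
  have hq' : (0 : ℤ) < 2 * m * n := by rw [← hqmn]; exact_mod_cast hq
  have hn : 0 < n := by by_contra! hn; nlinarith
  have hnm : n < m := by
    have : (0 : ℤ) < p := by exact_mod_cast hp.pos
    nlinarith
  lift m to ℕ using hm
  lift n to ℕ using hn.le
  have hsq : n ^ 2 ≤ m ^ 2 := Nat.pow_le_pow_left (by omega) 2
  refine ⟨m, n, by omega, by omega, by rwa [Int.gcd_natCast_natCast] at hmn, ?_, ?_, ?_⟩
  · rw [Nat.odd_iff]; omega
  · zify [hsq]; exact hpmn
  · exact_mod_cast hqmn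

theorem Nat.exists_euclid_param_of_odd {x y : ℕ} (hx : Odd x) (hy : 0 < y)
    (h : IsSquare (x ^ 2 + y ^ 2)) :
    ∃ a b k : ℕ, 0 < k ∧ 0 < b ∧ b < a ∧ a.Coprime b ∧ Odd (a - b) ∧
      x = k * (a ^ 2 - b ^ 2) ∧ y = k * (2 * a * b) := by
  obtain ⟨k, p, q, hk, hpq, rfl, rfl⟩ := Nat.exists_coprime' (Nat.gcd_pos_of_pos_right x hy)
  have hsq : IsSquare (p ^ 2 + q ^ 2) :=
    Nat.isSquare_of_sq_mul hk.ne' <| by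
      rwa [show k ^ 2 * (p ^ 2 + q ^ 2) = (p * k) ^ 2 + (q * k) ^ 2 by ring]
  obtain ⟨a, b, hb, hba, hab, hodd, rfl, rfl⟩ :=
    Nat.exists_euclid_param_of_coprime_of_odd hpq (Nat.odd_mul.mp hx).1
      (Nat.pos_of_mul_pos_right hy) hsq
  exact ⟨a, b, k, hk, hb, hba, hab, hodd, mul_comm _ _, mul_comm _ _⟩

structure IsPerfectEulerBrick (x y z : ℕ) : Prop where
  pos_x : 0 < x
  pos_y : 0 < y
  pos_z : 0 < z
  isSquare_xy : IsSquare (x ^ 2 + y ^ 2)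
  isSquare_xz : IsSquare (x ^ 2 + z ^ 2)
  isSquare_yz : IsSquare (y ^ 2 + z ^ 2)
  isSquare_xyz : IsSquare (x ^ 2 + y ^ 2 + z ^ 2)

namespace IsPerfectEulerBrick

theorem swap_left {x y z : ℕ} (h : IsPerfectEulerBrick x y z) : IsPerfectEulerBrick y x z where
  pos_x := h.pos_y
  pos_y := h.pos_x
  pos_z := h.pos_z
  isSquare_xy := add_comm (x ^ 2) _ ▸ h.isSquare_xy
  isSquare_xz := h.isSquare_yz
  isSquare_yz := h.isSquare_xz
  isSquare_xyz := add_comm (x ^ 2) (y ^ 2) ▸ h.isSquare_xyz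

theorem swap_right {x y z : ℕ} (h : IsPerfectEulerBrick x y z) : IsPerfectEulerBrick x z y where
  pos_x := h.pos_x
  pos_y := h.pos_z
  pos_z := h.pos_y
  isSquare_xy := h.isSquare_xz
  isSquare_xz := h.isSquare_xy
  isSquare_yz := add_comm (y ^ 2) _ ▸ h.isSquare_yz
  isSquare_xyz := add_right_comm (x ^ 2) (y ^ 2) _ ▸ h.isSquare_xyz

theorem of_mul {x y z c : ℕ} (h : IsPerfectEulerBrick (c * x) (c * y) (c * z)) :
    IsPerfectEulerBrick x y z := by
  have hc : c ≠ 0 := (Nat.pos_of_mul_pos_right h.pos_x).ne'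
  refine ⟨Nat.pos_of_mul_pos_left h.pos_x, Nat.pos_of_mul_pos_left h.pos_y,
    Nat.pos_of_mul_pos_left h.pos_z, ?_, ?_, ?_, ?_⟩ <;>
  refine Nat.isSquare_of_sq_mul hc ?_
  · convert h.isSquare_xy using 1; ring
  · convert h.isSquare_xz using 1; ring
  · convert h.isSquare_yz using 1; ring
  · convert h.isSquare_xyz using 1; ring

theorem exists_odd_left {x y z : ℕ} (h : IsPerfectEulerBrick x y z) :
    ∃ x' y' z', IsPerfectEulerBrick x' y' z' ∧ Odd x' := by
  by_cases hodd : Odd x ∨ Odd y ∨ Odd z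
  · rcases hodd with hx | hy | hz
    · exact ⟨x, y, z, h, hx⟩
    · exact ⟨y, x, z, h.swap_left, hy⟩
    · exact ⟨z, x, y, h.swap_right.swap_left, hz⟩
  simp only [not_or, Nat.not_odd_iff_even, even_iff_two_dvd] at hodd
  obtain ⟨⟨x, rfl⟩, ⟨y, rfl⟩, ⟨z, rfl⟩⟩ := hodd
  have : x < 2 * x := by have := h.pos_x; omega
  exact exists_odd_left (of_mul (c := 2) h)
termination_by x

end IsPerfectEulerBrick

theorem euler_brick_to_quartic_pair
    (e1 e2 e3 : ℕ) (h1 : 0 < e1) (h2 : 0 < e2) (h3 : 0 < e3)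
    (hd12 : IsSquare (e1^2 + e2^2))
    (hd13 : IsSquare (e1^2 + e3^2))
    (hd23 : IsSquare (e2^2 + e3^2))
    (hD : IsSquare (e1^2 + e2^2 + e3^2)) :
    ∃ a b m n : ℕ, 0 < b ∧ b < a ∧ 0 < n ∧ n < m ∧
      Nat.Coprime a b ∧ Nat.Coprime m n ∧
      Odd (a - b) ∧ Odd (m - n) ∧
      IsSquare ((2*a*b)^2 * (m^2 - n^2)^2 + (a^2 - b^2)^2 * (2*m*n)^2) ∧
      IsSquare ((a^2 + b^2)^2 * (m^2 - n^2)^2 + (a^2 - b^2)^2 * (2*m*n)^2) := by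
  obtain ⟨x, y, z, hbrick, hx⟩ :=
    (IsPerfectEulerBrick.mk h1 h2 h3 hd12 hd13 hd23 hD).exists_odd_left
  obtain ⟨a, b, k, hk, hb, hba, hab, hab_odd, hxk, hyk⟩ :=
    Nat.exists_euclid_param_of_odd hx hbrick.pos_y hbrick.isSquare_xy
  obtain ⟨m, n, l, hl, hn, hnm, hmn, hmn_odd, hxl, hzl⟩ :=
    Nat.exists_euclid_param_of_odd hx hbrick.pos_z hbrick.isSquare_xz
  have hkl : k * l ≠ 0 := by positivity
  refine ⟨a, b, m, n, hb, hba, hn, hnm, hab, hmn, hab_odd, hmn_odd,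
    Nat.isSquare_of_sq_mul hkl ?_, Nat.isSquare_of_sq_mul hkl ?_⟩
  · have : (k * l) ^ 2 * ((2*a*b)^2 * (m^2 - n^2)^2 + (a^2 - b^2)^2 * (2*m*n)^2) =
        (k * (2 * a * b)) ^ 2 * (l * (m ^ 2 - n ^ 2)) ^ 2 +
          (k * (a ^ 2 - b ^ 2)) ^ 2 * (l * (2 * m * n)) ^ 2 := by ring
    rw [this, ← hyk, ← hxl, ← hxk, ← hzl,
      show y ^ 2 * x ^ 2 + x ^ 2 * z ^ 2 = x ^ 2 * (y ^ 2 + z ^ 2) by ring]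
    exact (IsSquare.sq x).mul hbrick.isSquare_yz
  · have : (k * l) ^ 2 * ((a^2 + b^2)^2 * (m^2 - n^2)^2 + (a^2 - b^2)^2 * (2*m*n)^2) =
        ((k * (a ^ 2 - b ^ 2)) ^ 2 + (k * (2 * a * b)) ^ 2) * (l * (m ^ 2 - n ^ 2)) ^ 2 +
          (k * (a ^ 2 - b ^ 2)) ^ 2 * (l * (2 * m * n)) ^ 2 := by
      rw [← Nat.euclid_param_sq_add_sq hba.le]; ring
    rw [this, ← hyk, ← hxl, ← hxk, ← hzl,
      show (x ^ 2 + y ^ 2) * x ^ 2 + x ^ 2 * z ^ 2 = x ^ 2 * (x ^ 2 + y ^ 2 + z ^ 2) by ring]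
    exact (IsSquare.sq x).mul hbrick.isSquare_xyz
end

section
/- For the elliptic curve y² = (x+A)(x−2)(x+2) with A = 2 − 4c² and c = c(s) a rational function of s, the product of root differences (r1−r2)(r1−r3) with r1 = −A, r2 = 2, r3 = −2 equals A² − 4 = 16c²(c² − 1), and with c = (s⁴−6s²+1)/(1+s²)², the quantity 1 − c² = 16s²(s²−1)²/(1+s²)⁴ is a square in ℚ(s); hence (r1−r2)(r1−r3) lies in the square class of −1 in ℚ(s)*/ℚ(s)*². -/
/-!
With `s = tan φ` one has `c = cos 4φ` and `σ := 4s(s² - 1)/(1 + s²)² = -sin 4φ`,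
so `1 - c² = σ²`. Then `A² - 4 = 16c²(c² - 1) = -(4cσ)²`, and `4cσ ≠ 0` because `s` is not
a root of any of the nonzero polynomials `X`, `X² - 1`, `1 + X²`, `X⁴ - 6X² + 1`.
-/

open Polynomial

theorem one_sub_sq_cos_four_mul {K : Type*} [Field K] {s : K} (hs : 1 + s ^ 2 ≠ 0) :
    1 - ((s ^ 4 - 6 * s ^ 2 + 1) / (1 + s ^ 2) ^ 2) ^ 2
      = (4 * s * (s ^ 2 - 1) / (1 + s ^ 2) ^ 2) ^ 2 := by
  field_simp
  ring

theorem root_diff_product_eq_neg_sq {R : Type*} [CommRing R] {c σ A : R}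
    (hσ : 1 - c ^ 2 = σ ^ 2) (hA : A = 2 - 4 * c ^ 2) :
    (-A - 2) * (-A - -2) = -(4 * c * σ) ^ 2 := by
  linear_combination (A + 2 - 4 * c ^ 2) * hA - 16 * c ^ 2 * hσ

theorem aeval_ne_zero_of_transcendental {R A : Type*} [CommRing R] [CommRing A] [Algebra R A]
    {s : A} (hs : Transcendental R s) {p : R[X]} (hp : p ≠ 0) : aeval s p ≠ 0 :=
  fun h ↦ hp (transcendental_iff.1 hs p h)

section Transcendental

variable {F K : Type*} [Field F] [Field K] [Algebra F K] {s : K} (hs : Transcendental F s)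
include hs

theorem one_add_sq_ne_zero_of_transcendental : 1 + s ^ 2 ≠ 0 := by
  have h := aeval_ne_zero_of_transcendental hs (p := 1 + X ^ 2)
    fun h ↦ by simpa using congrArg (eval 0) h
  simpa only [map_add, map_pow, map_one, aeval_X] using h

theorem sq_sub_one_ne_zero_of_transcendental : s ^ 2 - 1 ≠ 0 := by
  have h := aeval_ne_zero_of_transcendental hs (p := X ^ 2 - 1)
    fun h ↦ by simpa using congrArg (eval 0) h
  simpa only [map_sub, map_pow, map_one, aeval_X] using h

theorem cos_four_mul_num_ne_zero_of_transcendental : s ^ 4 - 6 * s ^ 2 + 1 ≠ 0 := by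
  have h := aeval_ne_zero_of_transcendental hs (p := X ^ 4 - 6 * X ^ 2 + 1)
    fun h ↦ by simpa using congrArg (eval 0) h
  simpa only [map_add, map_sub, map_mul, map_pow, map_one, map_ofNat, aeval_X] using h

theorem cos_four_mul_ne_zero_of_transcendental :
    (s ^ 4 - 6 * s ^ 2 + 1) / (1 + s ^ 2) ^ 2 ≠ 0 :=
  div_ne_zero (cos_four_mul_num_ne_zero_of_transcendental hs)
    (pow_ne_zero _ (one_add_sq_ne_zero_of_transcendental hs))

theorem sin_four_mul_ne_zero_of_transcendental [CharZero K] :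
    4 * s * (s ^ 2 - 1) / (1 + s ^ 2) ^ 2 ≠ 0 := by
  have hs0 : s ≠ 0 := by simpa using aeval_ne_zero_of_transcendental hs (p := X) X_ne_zero
  exact div_ne_zero
    (mul_ne_zero (mul_ne_zero (by norm_num) hs0) (sq_sub_one_ne_zero_of_transcendental hs))
    (pow_ne_zero _ (one_add_sq_ne_zero_of_transcendental hs))

end Transcendental

theorem delta1_generic :
    ∀ (s c A : RatFunc ℚ),
      s = RatFunc.X →
      c = (s^4 - 6*s^2 + 1) / (1 + s^2)^2 →
      A = 2 - 4*c^2 →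
      ((-A) - 2) * ((-A) - (-2)) = A^2 - 4 ∧
      A^2 - 4 = 16*c^2*(c^2 - 1) ∧
      1 - c^2 = 16*s^2*(s^2 - 1)^2 / (1 + s^2)^4 ∧
      ∃ g : RatFunc ℚ, g ≠ 0 ∧ ((-A) - 2) * ((-A) - (-2)) = -g^2 := by
  intro s c A hs hc hA
  -- `convert` reconciles `RatFunc`'s own `ℚ`-algebra structure with `DivisionRing.toRatAlgebra`.
  have htr : Transcendental ℚ s := hs ▸ by
    convert RatFunc.transcendental_X (K := ℚ); exact Subsingleton.elim _ _
  have hσ : 1 - c ^ 2 = (4 * s * (s ^ 2 - 1) / (1 + s ^ 2) ^ 2) ^ 2 :=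
    hc ▸ one_sub_sq_cos_four_mul (one_add_sq_ne_zero_of_transcendental htr)
  refine ⟨by ring, by rw [hA]; ring, by rw [hσ, div_pow, ← pow_mul]; ring,
    4 * c * (4 * s * (s ^ 2 - 1) / (1 + s ^ 2) ^ 2), ?_, root_diff_product_eq_neg_sq hσ hA⟩
  exact mul_ne_zero (mul_ne_zero (by norm_num) (hc ▸ cos_four_mul_ne_zero_of_transcendental htr))
    (sin_four_mul_ne_zero_of_transcendental htr)
end

section
/- With r1 = −A, r2 = 2, r3 = −2 and A = 2−4c², the product (r2−r1)(r2−r3) = 4(A+2) = 16(1−c²), and since 1−c² is a square in ℚ(s) when c = (s⁴−6s²+1)/(1+s²)², this product is a square in ℚ(s). -/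
theorem RatFunc.one_add_X_sq_ne_zero {K : Type*} [Field K] : (1 + X ^ 2 : RatFunc K) ≠ 0 := by
  have hpoly : Polynomial.X ^ 2 + Polynomial.C (1 : K) ≠ 0 :=
    Polynomial.X_pow_add_C_ne_zero two_pos 1
  have := (map_ne_zero_iff _ (algebraMap_injective K)).mpr hpoly
  simpa [algebraMap_X, add_comm] using this

-- (1 + s²)⁴ - (s⁴ - 6s² + 1)² = 8s² · 2(s² - 1)², a difference of squares.
theorem one_sub_sq_eq_sq {F : Type*} [Field F] {s : F} (hs : 1 + s ^ 2 ≠ 0) :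
    1 - ((s ^ 4 - 6 * s ^ 2 + 1) / (1 + s ^ 2) ^ 2) ^ 2 =
      (4 * s * (s ^ 2 - 1) / (1 + s ^ 2) ^ 2) ^ 2 := by
  field_simp
  ring

theorem isSquare_one_sub_sq {F : Type*} [Field F] {s : F} (hs : 1 + s ^ 2 ≠ 0) :
    IsSquare (1 - ((s ^ 4 - 6 * s ^ 2 + 1) / (1 + s ^ 2) ^ 2) ^ 2) :=
  ⟨_, (one_sub_sq_eq_sq hs).trans (sq _)⟩

theorem delta2_generic :
    ∀ (s c A : RatFunc ℚ),
      s = RatFunc.X →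
      c = (s^4 - 6*s^2 + 1) / (1 + s^2)^2 →
      A = 2 - 4*c^2 →
      (2 - (-A)) * (2 - (-2)) = 4*(A + 2) ∧
      4*(A + 2) = 16*(1 - c^2) ∧
      IsSquare ((2 - (-A)) * (2 - (-2))) := by
  rintro s c A rfl hc rfl
  refine ⟨by ring, by ring, ?_⟩
  have hprod : (2 - -(2 - 4 * c ^ 2)) * (2 - -2) = 4 * 4 * (1 - c ^ 2) := by ring
  rw [hprod, hc]
  exact (IsSquare.mul_self 4).mul (isSquare_one_sub_sq RatFunc.one_add_X_sq_ne_zero)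
end
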